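/- arXiv:2209.07473 — 3 statements merged into one kernel-verified Lean document; each statement's English description precedes it below -/
import Mathlib

section
/- Let δ ∈ (0,1) and let (δ_k), (l_k) be strictly increasing sequences of positive reals with 17δ/16 < l₁/8. Let f₁, f₂ : ℂ → ℂ be entire functions such that |e^{f₁(z)} − δ_{k+1}| < l_{k+1}/4 for every z ∈ B_k and every k ∈ ℕ, and e^{Re f₂(w)} < 17/16 for every w ∈ ℝ. Then for every k ∈ ℕ, F maps B_k' into B_{k+1}'; more precisely, F(B_k') ⊆ {(z,w) ∈ ℂ×ℝ : |z − δ_{k+1}| ≤ l_{k+1}/2 and |w| < 17/16}, which is contained in B_{k+1}'. -/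
lemma norm_add_ofReal_sub_le_half {a c : ℂ} {t l : ℝ} (ha : ‖a - c‖ < l / 4) (ht : |t| < l / 4) :
    ‖a + t - c‖ ≤ l / 2 := by
  calc ‖a + t - c‖ = ‖(a - c) + t‖ := by ring_nf
    _ ≤ ‖a - c‖ + ‖(t : ℂ)‖ := norm_add_le _ _
    _ = ‖a - c‖ + |t| := by rw [Complex.norm_real, Real.norm_eq_abs]
    _ ≤ l / 2 := by linarith

theorem F_maps_Bk_into_Bk_succ_general
    (δ : ℝ) (hδ : δ ∈ Set.Ioo (0 : ℝ) 1)
    (δs ls : ℕ → ℝ)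
    (hlmono : StrictMono ls)
    (hδl : 17 * δ / 16 < ls 0 / 8)
    (f₁ f₂ : ℂ → ℂ)
    (hB : ∀ k, ∀ z : ℂ, ‖z - δs k‖ ≤ ls k →
      ‖Complex.exp (f₁ z) - δs (k + 1)‖ < ls (k + 1) / 4)
    (hR : ∀ w : ℝ, Real.exp ((f₂ (w : ℂ)).re) < 17 / 16)
    (F : ℂ × ℝ → ℂ × ℝ)
    (hF : ∀ p : ℂ × ℝ,
      F p = (Complex.exp (f₁ p.1) + (δ * Real.exp ((f₂ (p.2 : ℂ)).re) : ℝ),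
             Real.exp ((f₂ (p.2 : ℂ)).re)))
    (B' : ℕ → Set (ℂ × ℝ))
    (hB' : ∀ k, B' k = {p : ℂ × ℝ |
      ‖p.1 - δs k‖ ≤ ls k ∧ |p.2| < ls k / (8 * δ)}) :
    ∀ k, F '' B' k ⊆
        {p : ℂ × ℝ | ‖p.1 - δs (k + 1)‖ ≤ ls (k + 1) / 2 ∧ |p.2| < 17 / 16} ∧
      {p : ℂ × ℝ | ‖p.1 - δs (k + 1)‖ ≤ ls (k + 1) / 2 ∧ |p.2| < 17 / 16} ⊆
        B' (k + 1) := by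
  intro k
  have hδ0 : 0 < δ := hδ.1
  have hl : 17 * δ / 16 < ls (k + 1) / 8 :=
    hδl.trans_le (by linarith [hlmono.monotone (Nat.zero_le (k + 1))])
  refine ⟨?_, ?_⟩
  · rintro _ ⟨p, hp, rfl⟩
    rw [hB'] at hp
    have hexp := hR p.2
    have hexp_pos := Real.exp_pos (f₂ p.2).re
    have hshift : |δ * Real.exp (f₂ p.2).re| < ls (k + 1) / 4 := by
      rw [abs_of_pos (by positivity)]
      nlinarith
    rw [hF]
    exact ⟨norm_add_ofReal_sub_le_half (hB k p.1 hp.1) hshift, by rwa [abs_of_pos hexp_pos]⟩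
  · rintro p ⟨hp1, hp2⟩
    rw [hB']
    refine ⟨hp1.trans (half_le_self (by linarith)), hp2.trans ?_⟩
    rw [lt_div_iff₀ (by positivity)]
    linarith

/-- With `F(z,w) = (e^{f₁(z)} + δ e^{Re f₂(w)}, e^{Re f₂(w)})`, the polydisc
`Bₖ'` is mapped into a smaller polydisc contained in `B_{k+1}'`. -/
theorem F_maps_Bk_into_Bk_succ
    (δ : ℝ) (hδ : δ ∈ Set.Ioo (0 : ℝ) 1)
    (δs ls : ℕ → ℝ)
    (hδmono : StrictMono δs) (hδpos : ∀ k, 0 < δs k)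
    (hlmono : StrictMono ls) (hlpos : ∀ k, 0 < ls k)
    (hδl : 17 * δ / 16 < ls 0 / 8)
    (f₁ f₂ : ℂ → ℂ) (hf₁ : Differentiable ℂ f₁) (hf₂ : Differentiable ℂ f₂)
    (hB : ∀ k, ∀ z : ℂ, ‖z - δs k‖ ≤ ls k →
      ‖Complex.exp (f₁ z) - δs (k + 1)‖ < ls (k + 1) / 4)
    (hR : ∀ w : ℝ, Real.exp ((f₂ (w : ℂ)).re) < 17 / 16)
    (F : ℂ × ℝ → ℂ × ℝ)
    (hF : ∀ p : ℂ × ℝ,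
      F p = (Complex.exp (f₁ p.1) + (δ * Real.exp ((f₂ (p.2 : ℂ)).re) : ℝ),
             Real.exp ((f₂ (p.2 : ℂ)).re)))
    (B' : ℕ → Set (ℂ × ℝ))
    (hB' : ∀ k, B' k = {p : ℂ × ℝ |
      ‖p.1 - δs k‖ ≤ ls k ∧ |p.2| < ls k / (8 * δ)}) :
    ∀ k, F '' B' k ⊆
        {p : ℂ × ℝ | ‖p.1 - δs (k + 1)‖ ≤ ls (k + 1) / 2 ∧ |p.2| < 17 / 16} ∧
      {p : ℂ × ℝ | ‖p.1 - δs (k + 1)‖ ≤ ls (k + 1) / 2 ∧ |p.2| < 17 / 16} ⊆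
        B' (k + 1) :=
  F_maps_Bk_into_Bk_succ_general δ hδ δs ls hlmono hδl f₁ f₂ hB hR F hF B' hB'
end

section
/- Let δ ∈ (0,1) and let (δ_k), (l_k) be strictly increasing sequences of positive reals with 17δ/16 < l₁/8. Let f₁, f₂ : ℂ → ℂ be entire functions such that |e^{f₁(z)} − δ_k| < l_k/4 for every z ∈ B_k and every k ∈ ℕ, and e^{Re f₂(w)} < 17/16 for every w ∈ ℝ. Then for every k ∈ ℕ, F(B_k') ⊆ {(z,w) ∈ ℂ×ℝ : |z − δ_k| ≤ l_k/2 and |w| < 17/16} ⊆ B_k'; in particular each B_k' is forward invariant under F. -/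
open Set Metric

theorem setOf_norm_sub_le_and_abs_lt_eq (c : ℂ) (r s : ℝ) :
    {p : ℂ × ℝ | ‖p.1 - c‖ ≤ r ∧ |p.2| < s} = closedBall c r ×ˢ ball 0 s := by
  ext p
  simp only [mem_ofPred_eq, mem_prod, mem_closedBall_iff_norm, mem_ball_zero_iff,
    Real.norm_eq_abs]

theorem norm_add_ofReal_sub_le {a c : ℂ} {r : ℝ} : ‖a + r - c‖ ≤ ‖a - c‖ + |r| := calc
  ‖a + r - c‖ = ‖(a - c) + r‖ := by rw [add_sub_right_comm]
  _ ≤ ‖a - c‖ + |r| := by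
    simpa only [Complex.norm_real, Real.norm_eq_abs] using norm_add_le (a - c) (r : ℂ)

/-- The perturbation `δ e^{Re f₂}` moves the first coordinate by at most `δ M ≤ l/4`, so the
`l/4`-closeness of `e^{f₁}` to the centre gives `l/2`-closeness of the image. -/
theorem mapsTo_closedBall_prod_ball {f₁ f₂ : ℂ → ℂ} {δ l M : ℝ} {c : ℂ}
    {F : ℂ × ℝ → ℂ × ℝ}
    (hF : ∀ p : ℂ × ℝ,
      F p = (Complex.exp (f₁ p.1) + (δ * Real.exp ((f₂ (p.2 : ℂ)).re) : ℝ),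
             Real.exp ((f₂ (p.2 : ℂ)).re)))
    (hB : ∀ z : ℂ, ‖z - c‖ ≤ l → ‖Complex.exp (f₁ z) - c‖ < l / 4)
    (hR : ∀ w : ℝ, Real.exp ((f₂ (w : ℂ)).re) < M)
    (hδ : 0 ≤ δ) (hδM : δ * M ≤ l / 4) :
    MapsTo F (closedBall c l ×ˢ univ) (closedBall c (l / 2) ×ˢ ball 0 M) := by
  rintro p ⟨hp, -⟩
  rw [mem_closedBall_iff_norm] at hp
  set e := Real.exp ((f₂ (p.2 : ℂ)).re)
  have he : 0 < e := Real.exp_pos _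
  have hδe : |δ * e| ≤ l / 4 := by
    rw [abs_of_nonneg (by positivity)]
    exact (mul_le_mul_of_nonneg_left (hR p.2).le hδ).trans hδM
  rw [hF p, mem_prod, mem_closedBall_iff_norm, mem_ball_zero_iff, Real.norm_eq_abs,
    abs_of_pos he]
  refine ⟨?_, hR p.2⟩
  linarith [norm_add_ofReal_sub_le (a := Complex.exp (f₁ p.1)) (c := c) (r := δ * e),
    hB p.1 hp]

theorem F_maps_Bk_into_itself_general
    (δ : ℝ) (hδ : δ ∈ Set.Ioo (0 : ℝ) 1)
    (δs ls : ℕ → ℝ)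
    (hlmono : StrictMono ls)
    (hδl : 17 * δ / 16 < ls 0 / 8)
    (f₁ f₂ : ℂ → ℂ)
    (hB : ∀ k, ∀ z : ℂ, ‖z - δs k‖ ≤ ls k →
      ‖Complex.exp (f₁ z) - δs k‖ < ls k / 4)
    (hR : ∀ w : ℝ, Real.exp ((f₂ (w : ℂ)).re) < 17 / 16)
    (F : ℂ × ℝ → ℂ × ℝ)
    (hF : ∀ p : ℂ × ℝ,
      F p = (Complex.exp (f₁ p.1) + (δ * Real.exp ((f₂ (p.2 : ℂ)).re) : ℝ),
             Real.exp ((f₂ (p.2 : ℂ)).re)))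
    (B' : ℕ → Set (ℂ × ℝ))
    (hB' : ∀ k, B' k = {p : ℂ × ℝ |
      ‖p.1 - δs k‖ ≤ ls k ∧ |p.2| < ls k / (8 * δ)}) :
    ∀ k, (F '' B' k ⊆
        {p : ℂ × ℝ | ‖p.1 - δs k‖ ≤ ls k / 2 ∧ |p.2| < 17 / 16}) ∧
      ({p : ℂ × ℝ | ‖p.1 - δs k‖ ≤ ls k / 2 ∧ |p.2| < 17 / 16} ⊆ B' k) ∧
      F '' B' k ⊆ B' k := by
  intro k
  have hδ0 : 0 < δ := hδ.1
  have hδlk : 17 * δ / 16 < ls k / 8 :=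
    hδl.trans_le (by gcongr; exact hlmono.monotone k.zero_le)
  simp only [hB', setOf_norm_sub_le_and_abs_lt_eq]
  have hsmall : closedBall (δs k : ℂ) (ls k / 2) ×ˢ ball (0 : ℝ) (17 / 16) ⊆
      closedBall (δs k : ℂ) (ls k) ×ˢ ball 0 (ls k / (8 * δ)) :=
    prod_mono (closedBall_subset_closedBall (by linarith))
      (ball_subset_ball (by rw [le_div_iff₀ (by positivity)]; linarith))
  have himage : F '' (closedBall (δs k : ℂ) (ls k) ×ˢ ball 0 (ls k / (8 * δ))) ⊆
      closedBall (δs k : ℂ) (ls k / 2) ×ˢ ball 0 (17 / 16) :=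
    ((mapsTo_closedBall_prod_ball hF (hB k) hR hδ0.le (by linarith)).mono_left
      (prod_mono_right (subset_univ _))).image_subset
  exact ⟨himage, hsmall, himage.trans hsmall⟩

/-- With `F(z,w) = (e^{f₁(z)} + δ e^{Re f₂(w)}, e^{Re f₂(w)})` and
`|e^{f₁(z)} - δₖ| < lₖ/4` on `Bₖ`, each polydisc `Bₖ'` is mapped by `F` into a smaller
polydisc inside itself; in particular each `Bₖ'` is forward invariant. -/
theorem F_maps_Bk_into_itself
    (δ : ℝ) (hδ : δ ∈ Set.Ioo (0 : ℝ) 1)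
    (δs ls : ℕ → ℝ)
    (hδmono : StrictMono δs) (hδpos : ∀ k, 0 < δs k)
    (hlmono : StrictMono ls) (hlpos : ∀ k, 0 < ls k)
    (hδl : 17 * δ / 16 < ls 0 / 8)
    (f₁ f₂ : ℂ → ℂ) (hf₁ : Differentiable ℂ f₁) (hf₂ : Differentiable ℂ f₂)
    (hB : ∀ k, ∀ z : ℂ, ‖z - δs k‖ ≤ ls k →
      ‖Complex.exp (f₁ z) - δs k‖ < ls k / 4)
    (hR : ∀ w : ℝ, Real.exp ((f₂ (w : ℂ)).re) < 17 / 16)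
    (F : ℂ × ℝ → ℂ × ℝ)
    (hF : ∀ p : ℂ × ℝ,
      F p = (Complex.exp (f₁ p.1) + (δ * Real.exp ((f₂ (p.2 : ℂ)).re) : ℝ),
             Real.exp ((f₂ (p.2 : ℂ)).re)))
    (B' : ℕ → Set (ℂ × ℝ))
    (hB' : ∀ k, B' k = {p : ℂ × ℝ |
      ‖p.1 - δs k‖ ≤ ls k ∧ |p.2| < ls k / (8 * δ)}) :
    ∀ k, (F '' B' k ⊆
        {p : ℂ × ℝ | ‖p.1 - δs k‖ ≤ ls k / 2 ∧ |p.2| < 17 / 16}) ∧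
      ({p : ℂ × ℝ | ‖p.1 - δs k‖ ≤ ls k / 2 ∧ |p.2| < 17 / 16} ⊆ B' k) ∧
      F '' B' k ⊆ B' k :=
  F_maps_Bk_into_itself_general δ hδ δs ls hlmono hδl f₁ f₂ hB hR F hF B' hB'
end

section
/- There exist entire functions f₁, f₂ : ℂ → ℂ, a number δ ∈ (0,1), and strictly increasing sequences (δ_k), (l_k) of positive reals tending to ∞ such that the sets B_k' = {(z,w) ∈ ℂ × ℝ : |z − δ_k| ≤ l_k, |w| < l_k/(8δ)} have nonempty interior, are pairwise disjoint, and satisfy F(B_k') ⊆ B_k' for every k ∈ ℕ; that is, F admits infinitely many pairwise disjoint forward-invariant polydiscs in ℂ × ℝ. -/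
open Set Filter Topology

/-!
Take `f₂ = 0` and `δ = 1/2`, so that `F(z, w) = (e^{f₁(z)} + 1/2, 1)`, and let `B_k'` be the closed
disc `D_k` of radius `l_k = δ_k / 10` about `δ_k = e^{10(k+1)}`, times `(-l_k/4, l_k/4)`.
For the entire function `f₁(z) = 10 ∑ₙ (1 - e^{-z/lₙ})`, on `D_k` the terms with `n ≤ k` are within
`e^{-9(k-n+1)}` of `1` and those with `n > k` are `O(e^{-10(n-k)})`, so `f₁ = 10(k+1) + ε` with
`|ε| ≤ 1/30`. Hence `e^{f₁(z)} = δ_k e^ε` lies within `δ_k / 15` of `δ_k`, and adding `1/2` keeps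
it in `D_k`.
-/

lemma norm_one_sub_exp_neg_le (w : ℂ) :
    ‖1 - Complex.exp (-w)‖ ≤ ‖w‖ * Real.exp ‖w‖ := by
  simpa [norm_sub_rev] using Complex.norm_exp_sub_sum_le_norm_mul_exp (-w) 1

section SumOneSubExp

variable {ι : Type*} {a : ι → ℂ}

lemma norm_one_sub_exp_neg_div_le (ha : Summable fun i => ‖a i‖⁻¹) {z : ℂ} {R : ℝ}
    (hz : ‖z‖ ≤ R) (i : ι) :
    ‖1 - Complex.exp (-(z / a i))‖ ≤
      R * Real.exp (R * ∑' j, ‖a j‖⁻¹) * ‖a i‖⁻¹ := by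
  have hR : 0 ≤ R := (norm_nonneg z).trans hz
  have hw : ‖z / a i‖ ≤ R * ‖a i‖⁻¹ := by
    rw [norm_div, div_eq_mul_inv]; gcongr
  have hai : ‖a i‖⁻¹ ≤ ∑' j, ‖a j‖⁻¹ :=
    ha.le_tsum i fun j _ => inv_nonneg.2 (norm_nonneg _)
  calc ‖1 - Complex.exp (-(z / a i))‖ ≤ ‖z / a i‖ * Real.exp ‖z / a i‖ :=
        norm_one_sub_exp_neg_le _
    _ ≤ R * ‖a i‖⁻¹ * Real.exp (R * ∑' j, ‖a j‖⁻¹) := by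
        gcongr
        exact hw.trans (by gcongr)
    _ = R * Real.exp (R * ∑' j, ‖a j‖⁻¹) * ‖a i‖⁻¹ := by ring

lemma summable_one_sub_exp_neg_div (ha : Summable fun i => ‖a i‖⁻¹) (z : ℂ) :
    Summable fun i => 1 - Complex.exp (-(z / a i)) :=
  .of_norm_bounded (ha.mul_left _) (norm_one_sub_exp_neg_div_le ha le_rfl)

lemma differentiable_tsum_one_sub_exp_neg_div (ha : Summable fun i => ‖a i‖⁻¹) :
    Differentiable ℂ fun z => ∑' i, (1 - Complex.exp (-(z / a i))) := by
  intro z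
  have hterm (i : ι) : Differentiable ℂ fun w => 1 - Complex.exp (-(w / a i)) := by fun_prop
  have hball : DifferentiableOn ℂ (fun w => ∑' i, (1 - Complex.exp (-(w / a i))))
      (Metric.ball 0 (‖z‖ + 1)) :=
    Complex.differentiableOn_tsum_of_summable_norm (ha.mul_left _)
      (fun i => (hterm i).differentiableOn)
      Metric.isOpen_ball fun i w hw =>
        norm_one_sub_exp_neg_div_le ha (mem_ball_zero_iff.1 hw).le i
  exact hball.differentiableAt (Metric.isOpen_ball.mem_nhds (by simp))

end SumOneSubExp

lemma eight_thousand_le_exp_nine : (8000 : ℝ) ≤ Real.exp 9 := by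
  have h := pow_le_pow_left₀ (by norm_num) Real.exp_one_gt_d9.le 9
  rw [Real.exp_one_pow] at h
  norm_num at h
  linarith

lemma exp_neg_nine_le : Real.exp (-9) ≤ 1 / 8000 := by
  rw [Real.exp_neg, one_div]
  exact inv_anti₀ (by norm_num) eight_thousand_le_exp_nine

noncomputable def discCenter (k : ℕ) : ℝ := Real.exp (10 * (k + 1))

noncomputable def discRadius (k : ℕ) : ℝ := discCenter k / 10

noncomputable def staircase (z : ℂ) : ℂ := 10 * ∑' n, (1 - Complex.exp (-(z / discRadius n)))

lemma discCenter_pos (k : ℕ) : 0 < discCenter k := Real.exp_pos _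

lemma discRadius_pos (k : ℕ) : 0 < discRadius k := div_pos (discCenter_pos k) (by norm_num)

lemma discCenter_add (n m : ℕ) : discCenter (n + m) = discCenter n * Real.exp (10 * m) := by
  rw [discCenter, discCenter, ← Real.exp_add]; push_cast; ring_nf

lemma eight_thousand_le_discCenter (k : ℕ) : 8000 ≤ discCenter k :=
  eight_thousand_le_exp_nine.trans <|
    Real.exp_le_exp.2 (by linarith [(k.cast_nonneg : (0 : ℝ) ≤ k)])

lemma strictMono_discCenter : StrictMono discCenter := fun i j h => by
  unfold discCenter; gcongr

lemma tendsto_discCenter_atTop : Tendsto discCenter atTop atTop := by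
  refine Real.tendsto_exp_atTop.comp <|
    tendsto_atTop_mono (fun k => ?_) tendsto_natCast_atTop_atTop
  linarith [(k.cast_nonneg : (0 : ℝ) ≤ k)]

lemma discRadius_add_discRadius_lt {i j : ℕ} (h : i < j) :
    discRadius i + discRadius j < discCenter j - discCenter i := by
  obtain ⟨m, rfl⟩ := Nat.exists_eq_add_of_lt h
  have hm : Real.exp 10 ≤ Real.exp (10 * ↑(m + 1)) :=
    Real.exp_le_exp.2 (by push_cast; linarith [(m.cast_nonneg : (0 : ℝ) ≤ m)])
  have h11 := Real.add_one_le_exp 10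
  rw [discRadius, discRadius, add_assoc, discCenter_add]
  nlinarith [discCenter_pos i]

lemma discRadius_add_discRadius_lt_abs {i j : ℕ} (h : i ≠ j) :
    discRadius i + discRadius j < |discCenter i - discCenter j| := by
  rcases h.lt_or_gt with h | h
  · rw [abs_sub_comm]; exact (discRadius_add_discRadius_lt h).trans_le (le_abs_self _)
  · rw [add_comm]; exact (discRadius_add_discRadius_lt h).trans_le (le_abs_self _)

lemma inv_discRadius (n : ℕ) : (discRadius n)⁻¹ = 10 * Real.exp (-10) ^ (n + 1) := by
  rw [discRadius, discCenter, inv_div, div_eq_mul_inv, ← Real.exp_neg, ← Real.exp_nat_mul]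
  push_cast; ring_nf

lemma summable_inv_norm_discRadius : Summable fun n => ‖(discRadius n : ℂ)‖⁻¹ := by
  simp_rw [Complex.norm_real, Real.norm_of_nonneg (discRadius_pos _).le, inv_discRadius, pow_succ]
  exact ((summable_geometric_of_lt_one (Real.exp_nonneg _)
    (Real.exp_lt_one_iff.2 (by norm_num))).mul_right _).mul_left _

lemma differentiable_staircase : Differentiable ℂ staircase :=
  (differentiable_tsum_one_sub_exp_neg_div summable_inv_norm_discRadius).const_mul 10

lemma hasSum_exp_neg_nine_pow_succ :
    HasSum (fun j : ℕ => Real.exp (-9) ^ (j + 1)) (Real.exp (-9) / (1 - Real.exp (-9))) := by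
  simpa only [pow_succ', div_eq_mul_inv] using (hasSum_geometric_of_lt_one (Real.exp_nonneg _)
    (Real.exp_lt_one_iff.2 (by norm_num))).mul_left (Real.exp (-9))

lemma norm_exp_neg_div_discRadius_le {n m : ℕ} {z : ℂ}
    (hz : 9 / 10 * discCenter (n + m) ≤ z.re) :
    ‖Complex.exp (-(z / discRadius n))‖ ≤ Real.exp (-9) ^ (m + 1) := by
  have hm : (m : ℝ) + 1 ≤ Real.exp (10 * m) := by
    linarith [Real.add_one_le_exp (10 * (m : ℝ)), (m.cast_nonneg : (0 : ℝ) ≤ m)]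
  have hquot : 9 * ((m : ℝ) + 1) ≤ z.re / discRadius n := by
    rw [le_div_iff₀ (discRadius_pos n), discRadius]
    rw [discCenter_add] at hz
    nlinarith [discCenter_pos n]
  rw [Complex.norm_exp, Complex.neg_re, Complex.div_ofReal_re, ← Real.exp_nat_mul]
  exact Real.exp_le_exp.2 (by push_cast; linarith)

lemma norm_one_sub_exp_neg_div_discRadius_le {k j : ℕ} {z : ℂ}
    (hz : ‖z‖ ≤ 11 / 10 * discCenter k) :
    ‖1 - Complex.exp (-(z / discRadius (j + (k + 1))))‖ ≤ 22 * Real.exp (-9) ^ (j + 1) := by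
  set r := Real.exp (-9)
  have hgrowth : 1 ≤ r ^ (j + 1) * Real.exp (10 * ↑(j + 1)) := by
    rw [← Real.exp_nat_mul, ← Real.exp_add]
    exact Real.one_le_exp (by push_cast; linarith [(j.cast_nonneg : (0 : ℝ) ≤ j)])
  have hw : ‖z / discRadius (j + (k + 1))‖ ≤ 11 * r ^ (j + 1) := by
    rw [norm_div, Complex.norm_real, Real.norm_of_nonneg (discRadius_pos _).le,
      div_le_iff₀ (discRadius_pos _), discRadius, show j + (k + 1) = k + (j + 1) by ring,
      discCenter_add]
    nlinarith [discCenter_pos k]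
  have hsmall : r ^ (j + 1) ≤ 1 / 8000 :=
    (pow_le_of_le_one (Real.exp_nonneg _) (by linarith [exp_neg_nine_le]) j.succ_ne_zero).trans
      exp_neg_nine_le
  rw [norm_sub_rev]
  calc _ ≤ 2 * ‖-(z / discRadius (j + (k + 1)))‖ :=
        Complex.norm_exp_sub_one_le (by rw [norm_neg]; linarith)
    _ ≤ 22 * r ^ (j + 1) := by rw [norm_neg]; linarith

lemma norm_staircase_sub_le {k : ℕ} {z : ℂ} (hz : ‖z - discCenter k‖ ≤ discRadius k) :
    ‖staircase z - 10 * (k + 1)‖ ≤ 1 / 30 := by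
  set r := Real.exp (-9)
  have hgeom := hasSum_exp_neg_nine_pow_succ
  have hre : 9 / 10 * discCenter k ≤ z.re := by
    have h := (Complex.abs_re_le_norm _).trans hz
    rw [Complex.sub_re, Complex.ofReal_re, discRadius] at h
    linarith [(abs_le.1 h).1]
  have hnorm : ‖z‖ ≤ 11 / 10 * discCenter k := by
    have h := (norm_sub_norm_le z (discCenter k)).trans hz
    rw [Complex.norm_real, Real.norm_of_nonneg (discCenter_pos k).le, discRadius] at h
    linarith
  have hhead :
      ‖∑ n ∈ Finset.range (k + 1), Complex.exp (-(z / discRadius n))‖ ≤ r / (1 - r) :=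
    calc _ ≤ ∑ n ∈ Finset.range (k + 1), r ^ (k - n + 1) :=
          norm_sum_le_of_le _ fun n hn => norm_exp_neg_div_discRadius_le
            (by rwa [Nat.add_sub_cancel' (Nat.lt_succ_iff.1 (Finset.mem_range.1 hn))])
      _ = ∑ j ∈ Finset.range (k + 1), r ^ (j + 1) :=
          Finset.sum_range_reflect (fun j => r ^ (j + 1)) (k + 1)
      _ ≤ r / (1 - r) :=
          (hgeom.summable.sum_le_tsum _ fun _ _ => by positivity).trans_eq hgeom.tsum_eq
  have htail :
      ‖∑' j, (1 - Complex.exp (-(z / discRadius (j + (k + 1)))))‖ ≤ 22 * (r / (1 - r)) :=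
    tsum_of_norm_bounded (hgeom.mul_left 22) fun _ => norm_one_sub_exp_neg_div_discRadius_le hnorm
  have hsplit : staircase z - 10 * (k + 1) =
      10 * (∑' j, (1 - Complex.exp (-(z / discRadius (j + (k + 1))))) -
        ∑ n ∈ Finset.range (k + 1), Complex.exp (-(z / discRadius n))) := by
    rw [staircase, ← (summable_one_sub_exp_neg_div summable_inv_norm_discRadius
      z).sum_add_tsum_nat_add (k + 1), Finset.sum_sub_distrib]
    simp only [Finset.sum_const, Finset.card_range, nsmul_eq_mul, mul_one]
    push_cast; ring
  have hr : r / (1 - r) ≤ 1 / 7999 := by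
    rw [div_le_iff₀ (by linarith [exp_neg_nine_le])]; linarith [exp_neg_nine_le]
  rw [hsplit, norm_mul, Complex.norm_ofNat]
  linarith [norm_sub_le (∑' j, (1 - Complex.exp (-(z / discRadius (j + (k + 1))))))
    (∑ n ∈ Finset.range (k + 1), Complex.exp (-(z / discRadius n)))]

lemma norm_exp_staircase_add_half_sub_le {k : ℕ} {z : ℂ}
    (hz : ‖z - discCenter k‖ ≤ discRadius k) :
    ‖Complex.exp (staircase z) + ((1 / 2 : ℝ) : ℂ) - discCenter k‖ ≤ discRadius k := by
  set ε := staircase z - 10 * (k + 1)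
  have hε := norm_staircase_sub_le hz
  have hexp : Complex.exp (staircase z) = discCenter k * Complex.exp ε := by
    rw [discCenter, Complex.ofReal_exp, ← Complex.exp_add]
    push_cast
    congr 1
    ring
  have hexpε : ‖Complex.exp ε - 1‖ ≤ 1 / 15 :=
    (Complex.norm_exp_sub_one_le (by linarith)).trans (by linarith)
  calc _ = ‖(discCenter k : ℂ) * (Complex.exp ε - 1) + ((1 / 2 : ℝ) : ℂ)‖ := by
        rw [hexp]; ring_nf
    _ ≤ discCenter k * (1 / 15) + 1 / 2 := by
        refine (norm_add_le _ _).trans ?_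
        rw [norm_mul, Complex.norm_real, Complex.norm_real,
          Real.norm_of_nonneg (discCenter_pos k).le]
        linarith [mul_le_mul_of_nonneg_left hexpε (discCenter_pos k).le,
          show ‖(1 / 2 : ℝ)‖ = 1 / 2 by norm_num]
    _ ≤ discRadius k := by rw [discRadius]; linarith [eight_thousand_le_discCenter k]

def polydisc (c r h : ℝ) : Set (ℂ × ℝ) := {p | ‖p.1 - c‖ ≤ r ∧ |p.2| < h}

lemma nonempty_interior_polydisc {c r h : ℝ} (hr : 0 < r) (hh : 0 < h) :
    (interior (polydisc c r h)).Nonempty := by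
  refine ⟨((c : ℂ), 0), interior_maximal ?_ (Metric.isOpen_ball.prod Metric.isOpen_ball)
    ⟨Metric.mem_ball_self hr, Metric.mem_ball_self hh⟩⟩
  rintro ⟨z, w⟩ ⟨hz, hw⟩
  exact ⟨(mem_ball_iff_norm.1 hz).le, by simpa using hw⟩

lemma disjoint_polydisc {c c' r r' h h' : ℝ} (hcc' : r + r' < |c - c'|) :
    Disjoint (polydisc c r h) (polydisc c' r' h') := by
  have hballs : Disjoint (Metric.closedBall (c : ℂ) r) (Metric.closedBall (c' : ℂ) r') :=
    Metric.closedBall_disjoint_closedBall (by rwa [Complex.dist_eq, ← Complex.ofReal_sub,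
      Complex.norm_real, Real.norm_eq_abs])
  exact (hballs.preimage Prod.fst).mono (fun p hp => by simpa [dist_eq_norm] using hp.1)
    fun p hp => by simpa [dist_eq_norm] using hp.1

/-- Core of the first Proposition: there are entire `f₁, f₂`, `δ ∈ (0,1)` and sequences
`δₖ, lₖ` such that the map `F(z,w) = (e^{f₁(z)} + δ e^{Re f₂(w)}, e^{Re f₂(w)})` admits
infinitely many pairwise disjoint forward-invariant polydiscs `Bₖ'` in `ℂ × ℝ`. -/
theorem exists_map_with_invariant_polydiscs :
    ∃ (f₁ f₂ : ℂ → ℂ) (δ : ℝ) (δs ls : ℕ → ℝ),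
      Differentiable ℂ f₁ ∧ Differentiable ℂ f₂ ∧
      δ ∈ Set.Ioo (0 : ℝ) 1 ∧
      StrictMono δs ∧ (∀ k, 0 < δs k) ∧ Tendsto δs atTop atTop ∧
      StrictMono ls ∧ (∀ k, 0 < ls k) ∧ Tendsto ls atTop atTop ∧
      (∀ k, (interior {p : ℂ × ℝ |
        ‖p.1 - δs k‖ ≤ ls k ∧ |p.2| < ls k / (8 * δ)}).Nonempty) ∧
      (∀ i j, i ≠ j →
        Disjoint {p : ℂ × ℝ | ‖p.1 - δs i‖ ≤ ls i ∧ |p.2| < ls i / (8 * δ)}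
          {p : ℂ × ℝ | ‖p.1 - δs j‖ ≤ ls j ∧ |p.2| < ls j / (8 * δ)}) ∧
      (∀ k, (fun p : ℂ × ℝ =>
          ((Complex.exp (f₁ p.1) + (δ * Real.exp ((f₂ (p.2 : ℂ)).re) : ℝ),
            Real.exp ((f₂ (p.2 : ℂ)).re)) : ℂ × ℝ)) ''
          {p : ℂ × ℝ | ‖p.1 - δs k‖ ≤ ls k ∧ |p.2| < ls k / (8 * δ)} ⊆
          {p : ℂ × ℝ | ‖p.1 - δs k‖ ≤ ls k ∧ |p.2| < ls k / (8 * δ)}) := by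
  refine ⟨staircase, fun _ => 0, 1 / 2, discCenter, discRadius, differentiable_staircase,
    differentiable_const 0, by norm_num, strictMono_discCenter, discCenter_pos,
    tendsto_discCenter_atTop, strictMono_discCenter.div_const (by norm_num), discRadius_pos,
    tendsto_discCenter_atTop.atTop_div_const (by norm_num),
    fun k => nonempty_interior_polydisc (discRadius_pos k) (by linarith [discRadius_pos k]),
    fun i j hij => disjoint_polydisc (discRadius_add_discRadius_lt_abs hij), ?_⟩
  rintro k _ ⟨⟨z, w⟩, ⟨hz, -⟩, rfl⟩
  simp only [Complex.zero_re, Real.exp_zero, mul_one]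
  refine ⟨norm_exp_staircase_add_half_sub_le hz, ?_⟩
  rw [abs_one, discRadius]
  linarith [eight_thousand_le_discCenter k]
end
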